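/- arXiv:2406.11520 — 3 statements merged into one kernel-verified Lean document; each statement's English description precedes it below -/
import Mathlib

section
/- For all τ > 0, k ∈ ℝ and v > 0 the strict bounds max(1 − e^k, 0) < BS(τ,k,v) < 1 hold. -/
open Real Filter Set

/-- Standard normal probability density function. -/
noncomputable def stdGaussPDF (x : ℝ) : ℝ :=
  (Real.sqrt (2 * Real.pi))⁻¹ * Real.exp (-(x ^ 2) / 2)

/-- Standard normal cumulative distribution function. -/
noncomputable def stdGaussCDF (x : ℝ) : ℝ :=
  ∫ t in Set.Iic x, stdGaussPDF t

/-- d1 term of the Black–Scholes formula. -/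
noncomputable def d1 (τ k v : ℝ) : ℝ :=
  -k / (v * Real.sqrt τ) + v * Real.sqrt τ / 2

/-- d2 term of the Black–Scholes formula. -/
noncomputable def d2 (τ k v : ℝ) : ℝ :=
  -k / (v * Real.sqrt τ) - v * Real.sqrt τ / 2

/-- Black–Scholes call price in units of the forward. -/
noncomputable def BS (τ k v : ℝ) : ℝ :=
  stdGaussCDF (d1 τ k v) - Real.exp k * stdGaussCDF (d2 τ k v)

/-- The butterfly functional. -/
noncomputable def But (τ k v₀ v₁ v₂ : ℝ) : ℝ :=
  (1 + d1 τ k v₀ * v₁ * Real.sqrt τ) * (1 + d2 τ k v₀ * v₁ * Real.sqrt τ) + v₀ * v₂ * τ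

open MeasureTheory

lemma stdGaussPDF_pos (x : ℝ) : 0 < stdGaussPDF x := by
  unfold stdGaussPDF
  positivity

lemma stdGaussPDF_eq (x : ℝ) :
    stdGaussPDF x = (Real.sqrt (2 * Real.pi))⁻¹ * Real.exp (-(1/2) * x ^ 2) := by
  unfold stdGaussPDF; ring_nf

lemma integrable_stdGaussPDF : Integrable stdGaussPDF := by
  have : Integrable (fun x : ℝ => (Real.sqrt (2 * Real.pi))⁻¹ * Real.exp (-(1/2) * x ^ 2)) :=
    (integrable_exp_neg_mul_sq (by norm_num : (0:ℝ) < 1/2)).const_mul _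
  exact this.congr (by filter_upwards with x using (stdGaussPDF_eq x).symm)

lemma integral_stdGaussPDF : ∫ x, stdGaussPDF x = 1 := by
  have h := integral_gaussian (1/2 : ℝ)
  have h2 : Real.sqrt (π / (1/2)) = Real.sqrt (2 * π) := by norm_num [mul_comm]
  simp_rw [stdGaussPDF_eq]
  rw [MeasureTheory.integral_const_mul, h, h2,
    inv_mul_cancel₀ (by positivity : Real.sqrt (2 * π) ≠ 0)]

lemma integrableOn_stdGaussPDF (s : Set ℝ) : IntegrableOn stdGaussPDF s :=
  integrable_stdGaussPDF.integrableOn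

/-- `1 - Φ x` as an integral over `Ioi x`. -/
lemma one_sub_stdGaussCDF (x : ℝ) : 1 - stdGaussCDF x = ∫ t in Set.Ioi x, stdGaussPDF t := by
  have := intervalIntegral.integral_Iic_add_Ioi (b := x) (f := stdGaussPDF)
    (integrableOn_stdGaussPDF _) (integrableOn_stdGaussPDF _)
  rw [integral_stdGaussPDF] at this
  unfold stdGaussCDF
  linarith

lemma stdGaussCDF_pos (x : ℝ) : 0 < stdGaussCDF x := by
  unfold stdGaussCDF
  rw [setIntegral_pos_iff_support_of_nonneg_ae
    (Filter.Eventually.of_forall fun t => (stdGaussPDF_pos t).le)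
    (integrableOn_stdGaussPDF _)]
  have hs : Set.Iic x ⊆ Function.support stdGaussPDF ∩ Set.Iic x := fun t ht =>
    ⟨(stdGaussPDF_pos t).ne', ht⟩
  calc (0:ENNReal) < volume (Set.Iic x) := by simp [Real.volume_Iic]
    _ ≤ _ := measure_mono hs

lemma stdGaussCDF_lt_one (x : ℝ) : stdGaussCDF x < 1 := by
  have h : 0 < ∫ t in Set.Ioi x, stdGaussPDF t := by
    rw [setIntegral_pos_iff_support_of_nonneg_ae
      (Filter.Eventually.of_forall fun t => (stdGaussPDF_pos t).le)
      (integrableOn_stdGaussPDF _)]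
    have hs : Set.Ioi x ⊆ Function.support stdGaussPDF ∩ Set.Ioi x := fun t ht =>
      ⟨(stdGaussPDF_pos t).ne', ht⟩
    calc (0:ENNReal) < volume (Set.Ioi x) := by simp [Real.volume_Ioi]
      _ ≤ _ := measure_mono hs
  have := one_sub_stdGaussCDF x
  linarith

/-- key pointwise identity -/
lemma shift_pdf_eq (k a x : ℝ) :
    Real.exp k * stdGaussPDF (x - a) = stdGaussPDF x * Real.exp (k + x * a - a ^ 2 / 2) := by
  unfold stdGaussPDF
  rw [mul_comm (Real.exp k), mul_assoc, ← Real.exp_add, mul_assoc, ← Real.exp_add]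
  congr 1
  ring_nf

lemma integrable_shift (k a : ℝ) :
    Integrable (fun x => Real.exp k * stdGaussPDF (x - a)) :=
  (integrable_stdGaussPDF.comp_sub_right a).const_mul _

/-- translation identity for the CDF -/
lemma cdf_shift (a x : ℝ) :
    (∫ t in Set.Iic x, stdGaussPDF (t - a)) = stdGaussCDF (x - a) := by
  have hmp : MeasurePreserving (fun t : ℝ => t - a) volume volume :=
    measurePreserving_sub_right volume a
  have hemb : MeasurableEmbedding (fun t : ℝ => t - a) :=
    (MeasurableEquiv.subRight a).measurableEmbedding
  have hpre : (fun t : ℝ => t - a) ⁻¹' Set.Iic (x - a) = Set.Iic x := by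
    ext t; simp [sub_le_sub_iff_right]
  have := hmp.setIntegral_preimage_emb hemb stdGaussPDF (Set.Iic (x - a))
  rw [hpre] at this
  rw [this]; rfl

lemma ioi_shift (a x : ℝ) :
    (∫ t in Set.Ioi x, stdGaussPDF (t - a)) = ∫ t in Set.Ioi (x - a), stdGaussPDF t := by
  have hmp : MeasurePreserving (fun t : ℝ => t - a) volume volume :=
    measurePreserving_sub_right volume a
  have hemb : MeasurableEmbedding (fun t : ℝ => t - a) :=
    (MeasurableEquiv.subRight a).measurableEmbedding
  have hpre : (fun t : ℝ => t - a) ⁻¹' Set.Ioi (x - a) = Set.Ioi x := by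
    ext t; simp [sub_lt_sub_iff_right]
  have := hmp.setIntegral_preimage_emb hemb stdGaussPDF (Set.Ioi (x - a))
  rw [hpre] at this
  rw [this]

theorem stmt5 (τ k v : ℝ) (hτ : 0 < τ) (hv : 0 < v) :
    max (1 - Real.exp k) 0 < BS τ k v ∧ BS τ k v < 1 := by
  set a : ℝ := v * Real.sqrt τ with ha_def
  have ha : 0 < a := mul_pos hv (Real.sqrt_pos.mpr hτ)
  set D : ℝ := d1 τ k v with hD_def
  have hd2 : d2 τ k v = D - a := by
    simp only [hD_def, d1, d2, ha_def]; ring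
  have hDa : k + D * a - a ^ 2 / 2 = 0 := by
    simp only [hD_def, d1, ha_def]
    field_simp
    ring
  -- the exponent function
  have hexp_le : ∀ x ≤ D, Real.exp (k + x * a - a ^ 2 / 2) ≤ 1 := by
    intro x hx
    rw [← Real.exp_zero, ← hDa]
    exact Real.exp_le_exp.mpr (by nlinarith)
  have hexp_lt : ∀ x < D, Real.exp (k + x * a - a ^ 2 / 2) < 1 := by
    intro x hx
    rw [← Real.exp_zero, ← hDa]
    exact Real.exp_lt_exp.mpr (by nlinarith)
  have hexp_gt : ∀ x, D < x → 1 < Real.exp (k + x * a - a ^ 2 / 2) := by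
    intro x hx
    rw [← Real.exp_zero, ← hDa]
    exact Real.exp_lt_exp.mpr (by nlinarith)
  have hint1 : IntegrableOn (fun x => stdGaussPDF x - Real.exp k * stdGaussPDF (x - a))
      (Set.Iic D) := (integrable_stdGaussPDF.sub (integrable_shift k a)).integrableOn
  have hint2 : IntegrableOn (fun x => Real.exp k * stdGaussPDF (x - a) - stdGaussPDF x)
      (Set.Ioi D) := ((integrable_shift k a).sub integrable_stdGaussPDF).integrableOn
  constructor
  · rw [max_lt_iff]
    constructor
    · -- 1 - e^k < BS
      have hshift : (∫ t in Set.Ioi D, stdGaussPDF (t - a)) = ∫ t in Set.Ioi (D - a), stdGaussPDF t :=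
        ioi_shift a D
      have hpos : 0 < ∫ x in Set.Ioi D,
          (Real.exp k * stdGaussPDF (x - a) - stdGaussPDF x) := by
        rw [setIntegral_pos_iff_support_of_nonneg_ae ?_ hint2]
        · have hs : Set.Ioi D ⊆
              Function.support (fun x => Real.exp k * stdGaussPDF (x - a) - stdGaussPDF x)
              ∩ Set.Ioi D := by
            intro x hx
            refine ⟨?_, hx⟩
            have := hexp_gt x (Set.mem_Ioi.mp hx)
            have hpdf := stdGaussPDF_pos x
            have : 0 < Real.exp k * stdGaussPDF (x - a) - stdGaussPDF x := by
              rw [shift_pdf_eq]; nlinarith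
            exact this.ne'
          calc (0:ENNReal) < volume (Set.Ioi D) := by simp [Real.volume_Ioi]
            _ ≤ _ := measure_mono hs
        · filter_upwards [ae_restrict_mem measurableSet_Ioi] with x hx
          have := hexp_gt x (Set.mem_Ioi.mp hx)
          have hpdf := stdGaussPDF_pos x
          rw [Pi.zero_apply, shift_pdf_eq]
          nlinarith
      rw [MeasureTheory.integral_sub ((integrable_shift k a).integrableOn)
        (integrableOn_stdGaussPDF _), MeasureTheory.integral_const_mul, hshift] at hpos
      have h1 : 1 - stdGaussCDF D = ∫ t in Set.Ioi D, stdGaussPDF t := one_sub_stdGaussCDF D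
      have h2 : 1 - stdGaussCDF (D - a) = ∫ t in Set.Ioi (D - a), stdGaussPDF t :=
        one_sub_stdGaussCDF (D - a)
      have hek : (0:ℝ) < Real.exp k := Real.exp_pos k
      unfold BS
      rw [hd2, ← hD_def]
      nlinarith [hpos, h1, h2]
    · -- 0 < BS
      have hshift : (∫ t in Set.Iic D, stdGaussPDF (t - a)) = stdGaussCDF (D - a) :=
        cdf_shift a D
      have hpos : 0 < ∫ x in Set.Iic D,
          (stdGaussPDF x - Real.exp k * stdGaussPDF (x - a)) := by
        rw [setIntegral_pos_iff_support_of_nonneg_ae ?_ hint1]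
        · have hs : Set.Iio D ⊆
              Function.support (fun x => stdGaussPDF x - Real.exp k * stdGaussPDF (x - a))
              ∩ Set.Iic D := by
            intro x hx
            refine ⟨?_, Set.Iio_subset_Iic_self hx⟩
            have := hexp_lt x (Set.mem_Iio.mp hx)
            have hpdf := stdGaussPDF_pos x
            have : 0 < stdGaussPDF x - Real.exp k * stdGaussPDF (x - a) := by
              rw [shift_pdf_eq]; nlinarith
            exact this.ne'
          calc (0:ENNReal) < volume (Set.Iio D) := by simp [Real.volume_Iio]
            _ ≤ _ := measure_mono hs
        · filter_upwards [ae_restrict_mem measurableSet_Iic] with x hx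
          have := hexp_le x (Set.mem_Iic.mp hx)
          have hpdf := stdGaussPDF_pos x
          rw [Pi.zero_apply, shift_pdf_eq]
          nlinarith
      rw [MeasureTheory.integral_sub (integrableOn_stdGaussPDF _)
        ((integrable_shift k a).integrableOn), MeasureTheory.integral_const_mul, hshift] at hpos
      unfold BS
      rw [hd2, ← hD_def]
      exact hpos.trans_eq rfl
  · -- BS < 1
    have h1 : stdGaussCDF (d1 τ k v) < 1 := stdGaussCDF_lt_one _
    have h2 : 0 < stdGaussCDF (d2 τ k v) := stdGaussCDF_pos _
    have hek : (0:ℝ) < Real.exp k := Real.exp_pos k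
    unfold BS
    nlinarith
end

section
/- (Implied density identity.) Let τ > 0, F > 0 and let v : ℝ → (0,∞) be twice differentiable. Define the call price in strike coordinates C : (0,∞) → ℝ by C(K) = F · BS(τ, log(K/F), v(log(K/F))). Then C is twice differentiable and for every K > 0, writing k = log(K/F), C''(K) = [φ(d2(τ,k,v(k))) / (K · v(k) · √τ)] · But(τ, k, v(k), v'(k), v''(k)). -/
open Real Filter Set

/-! In log-moneyness `k = log (K / F)` the identity `φ(d1) = eᵏ φ(d2)` cancels the `∂d/∂k` terms of
`∂ₖ BS(τ, k, v k)`, leaving `eᵏ (φ(d2) v' √τ - Φ(d2))`; since `dk/dK = 1/K` and `eᵏ = K/F`, this is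
`C'(K) = φ(d2) v' √τ - Φ(d2)`. Differentiating once more with `φ'(x) = -x φ(x)` and
`∂ₖ d2 = -(1 + d1 v' √τ) / (v √τ)`, `∂ₖ d1 = -(1 + d2 v' √τ) / (v √τ)` factors out `φ(d2) / (v √τ)`
times the butterfly `But`. -/

lemma hasDerivAt_integral_Iic {f : ℝ → ℝ} (hf : Continuous f)
    (hfi : MeasureTheory.Integrable f) (x : ℝ) :
    HasDerivAt (fun y => ∫ t in Iic y, f t) (f x) x := by
  have hsplit : ∀ y, ∫ t in Iic y, f t = (∫ t in Iic 0, f t) + ∫ t in (0 : ℝ)..y, f t := fun y => by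
    rw [← intervalIntegral.integral_Iic_sub_Iic hfi.integrableOn hfi.integrableOn]
    ring
  rw [show (fun y => ∫ t in Iic y, f t) = _ from funext hsplit]
  exact (intervalIntegral.integral_hasDerivAt_right (hf.intervalIntegrable 0 x)
    (hf.stronglyMeasurableAtFilter _ _) hf.continuousAt).const_add _

lemma continuous_stdGaussPDF : Continuous stdGaussPDF := by
  unfold stdGaussPDF
  fun_prop

lemma integrable_stdGaussPDF_s10 : MeasureTheory.Integrable stdGaussPDF := by
  have h : stdGaussPDF = fun x => (√(2 * π))⁻¹ * rexp (-(1 / 2) * x ^ 2) := by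
    funext x
    unfold stdGaussPDF
    ring_nf
  rw [h]
  exact (integrable_exp_neg_mul_sq (by norm_num)).const_mul _

lemma hasDerivAt_stdGaussCDF (x : ℝ) : HasDerivAt stdGaussCDF (stdGaussPDF x) x :=
  hasDerivAt_integral_Iic continuous_stdGaussPDF integrable_stdGaussPDF_s10 x

lemma hasDerivAt_stdGaussPDF (x : ℝ) : HasDerivAt stdGaussPDF (-x * stdGaussPDF x) x := by
  have hexp : HasDerivAt (fun y : ℝ => -(y ^ 2) / 2) (-x) x :=
    ((hasDerivAt_pow 2 x).neg.div_const 2).congr_deriv (by ring_nf)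
  unfold stdGaussPDF
  exact ((hexp.exp).const_mul _).congr_deriv (by ring)

section Smile

variable {τ : ℝ}

lemma d1_eq_d2_add (k v : ℝ) : d1 τ k v = d2 τ k v + v * √τ := by
  unfold d1 d2
  ring

lemma stdGaussPDF_d1 {k v : ℝ} (hτ : 0 < τ) (hv : v ≠ 0) :
    stdGaussPDF (d1 τ k v) = rexp k * stdGaussPDF (d2 τ k v) := by
  have hs : √τ ≠ 0 := (sqrt_pos.mpr hτ).ne'
  have harg : -(d1 τ k v ^ 2) / 2 = k + -(d2 τ k v ^ 2) / 2 := by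
    unfold d1 d2
    field_simp
    ring
  unfold stdGaussPDF
  rw [harg, exp_add]
  ring

variable {v : ℝ → ℝ} {k v₁ : ℝ}

lemma hasDerivAt_d2_smile (hτ : 0 < τ) (hv : v k ≠ 0) (hv₁ : HasDerivAt v v₁ k) :
    HasDerivAt (fun x => d2 τ x (v x)) (-(1 + d1 τ k (v k) * v₁ * √τ) / (v k * √τ)) k := by
  have hs : √τ ≠ 0 := (sqrt_pos.mpr hτ).ne'
  have hvs := hv₁.mul_const √τ
  have h := (hasDerivAt_neg' k |>.div hvs (mul_ne_zero hv hs)).sub (hvs.div_const 2)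
  unfold d2
  refine h.congr_deriv ?_
  unfold d1
  field_simp
  ring

lemma hasDerivAt_d1_smile (hτ : 0 < τ) (hv : v k ≠ 0) (hv₁ : HasDerivAt v v₁ k) :
    HasDerivAt (fun x => d1 τ x (v x)) (-(1 + d2 τ k (v k) * v₁ * √τ) / (v k * √τ)) k := by
  simp only [d1_eq_d2_add]
  refine ((hasDerivAt_d2_smile hτ hv hv₁).add (hv₁.mul_const √τ)).congr_deriv ?_
  rw [d1_eq_d2_add]
  field_simp
  ring

/-- `∂C/∂K` in log-moneyness: the digital `-Φ(d2)` plus the smile correction `φ(d2) v' √τ`. -/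
noncomputable def callStrikeSlope (τ : ℝ) (v v' : ℝ → ℝ) (k : ℝ) : ℝ :=
  stdGaussPDF (d2 τ k (v k)) * (v' k * √τ) - stdGaussCDF (d2 τ k (v k))

lemma hasDerivAt_BS_smile (hτ : 0 < τ) (hv : v k ≠ 0) (hv₁ : HasDerivAt v v₁ k) :
    HasDerivAt (fun x => BS τ x (v x))
      (rexp k * (stdGaussPDF (d2 τ k (v k)) * (v₁ * √τ) - stdGaussCDF (d2 τ k (v k)))) k := by
  have h := ((hasDerivAt_stdGaussCDF _).comp k (hasDerivAt_d1_smile hτ hv hv₁)).sub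
    ((hasDerivAt_exp k).mul ((hasDerivAt_stdGaussCDF _).comp k (hasDerivAt_d2_smile hτ hv hv₁)))
  refine h.congr_deriv ?_
  rw [Function.comp_apply, stdGaussPDF_d1 hτ hv, d1_eq_d2_add]
  field_simp
  ring

lemma hasDerivAt_callStrikeSlope {v' : ℝ → ℝ} {v₂ : ℝ} (hτ : 0 < τ) (hv : v k ≠ 0)
    (hv₁ : HasDerivAt v (v' k) k) (hv₂ : HasDerivAt v' v₂ k) :
    HasDerivAt (callStrikeSlope τ v v')
      (stdGaussPDF (d2 τ k (v k)) / (v k * √τ) * But τ k (v k) (v' k) v₂) k := by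
  have hs : √τ ≠ 0 := (sqrt_pos.mpr hτ).ne'
  have hd2 := hasDerivAt_d2_smile hτ hv hv₁
  have h := (((hasDerivAt_stdGaussPDF _).comp k hd2).mul (hv₂.mul_const √τ)).sub
    ((hasDerivAt_stdGaussCDF _).comp k hd2)
  refine h.congr_deriv ?_
  have hτ' : τ = √τ ^ 2 := (sq_sqrt hτ.le).symm
  unfold But
  rw [Function.comp_apply, d1_eq_d2_add]
  generalize d2 τ k (v k) = d
  generalize √τ = s at hs hτ' ⊢
  subst hτ'
  field_simp
  ring

end Smile

lemma hasDerivAt_log_div {K F : ℝ} (hK : K ≠ 0) (hF : F ≠ 0) :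
    HasDerivAt (fun K' => log (K' / F)) K⁻¹ K := by
  refine ((hasDerivAt_log (div_ne_zero hK hF)).comp K ((hasDerivAt_id K).div_const F)).congr_deriv ?_
  field_simp

theorem stmt10 (τ F : ℝ) (hτ : 0 < τ) (hF : 0 < F)
    (v v' v'' : ℝ → ℝ) (hv : ∀ k, 0 < v k)
    (hv' : ∀ k, HasDerivAt v (v' k) k)
    (hv'' : ∀ k, HasDerivAt v' (v'' k) k) :
    ∃ C' : ℝ → ℝ,
      (∀ K, 0 < K →
        HasDerivAt (fun K' => F * BS τ (Real.log (K' / F)) (v (Real.log (K' / F))))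
          (C' K) K) ∧
      (∀ K, 0 < K →
        HasDerivAt C'
          (stdGaussPDF (d2 τ (Real.log (K / F)) (v (Real.log (K / F)))) /
              (K * v (Real.log (K / F)) * Real.sqrt τ) *
            But τ (Real.log (K / F)) (v (Real.log (K / F)))
              (v' (Real.log (K / F))) (v'' (Real.log (K / F)))) K) := by
  refine ⟨fun K => callStrikeSlope τ v v' (log (K / F)), fun K hK => ?_, fun K hK => ?_⟩
  all_goals have hlog := hasDerivAt_log_div hK.ne' hF.ne'
  · refine (((hasDerivAt_BS_smile hτ (hv _).ne' (hv' _)).comp K hlog).const_mul F).congr_deriv ?_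
    rw [exp_log (div_pos hK hF)]
    unfold callStrikeSlope
    field_simp
  · refine ((hasDerivAt_callStrikeSlope hτ (hv _).ne' (hv' _) (hv'' _)).comp K hlog).congr_deriv ?_
    field_simp
end

section
/- (Short-expiry limit under the vanishing-at-origin condition.) Fix k ∈ ℝ and let v : (0,∞) → (0,∞) satisfy v(τ)·√τ → 0 as τ → 0⁺. Then BS(τ, k, v(τ)) → max(1 − e^k, 0) as τ → 0⁺. -/
/-! With `s = v √τ → 0⁺`, both `d₁` and `d₂` are `-k / s + o(1)`, so `Φ(d₁)` and `Φ(d₂)` have the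
same limit `L`, namely `1`, `Φ(0)` or `0` according as `k < 0`, `k = 0` or `k > 0`. Hence
`BS → L (1 - eᵏ)`, which is `max (1 - eᵏ) 0` in each of the three cases. -/

open Real Filter Set MeasureTheory ProbabilityTheory Topology

lemma stdGaussPDF_eq_gaussianPDFReal : stdGaussPDF = gaussianPDFReal 0 1 := by
  funext x
  simp [stdGaussPDF, gaussianPDFReal]

lemma stdGaussCDF_eq_cdf_gaussianReal : stdGaussCDF = cdf (gaussianReal 0 1) := by
  funext x
  rw [cdf_eq_real, measureReal_def, gaussianReal_apply_eq_integral _ one_ne_zero,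
    ENNReal.toReal_ofReal (setIntegral_nonneg measurableSet_Iic
      fun t _ ↦ gaussianPDFReal_nonneg 0 1 t), stdGaussCDF, stdGaussPDF_eq_gaussianPDFReal]

lemma tendsto_stdGaussCDF_atTop : Tendsto stdGaussCDF atTop (𝓝 1) :=
  stdGaussCDF_eq_cdf_gaussianReal ▸ tendsto_cdf_atTop _

lemma tendsto_stdGaussCDF_atBot : Tendsto stdGaussCDF atBot (𝓝 0) :=
  stdGaussCDF_eq_cdf_gaussianReal ▸ tendsto_cdf_atBot _

lemma continuous_stdGaussCDF : Continuous stdGaussCDF := by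
  have hint : Integrable stdGaussPDF :=
    stdGaussPDF_eq_gaussianPDFReal ▸ integrable_gaussianPDFReal 0 1
  have hprim : stdGaussCDF = fun x ↦ stdGaussCDF 0 + ∫ t in (0 : ℝ)..x, stdGaussPDF t := by
    funext x
    rw [← intervalIntegral.integral_Iic_sub_Iic hint.integrableOn hint.integrableOn]
    simp only [stdGaussCDF, add_sub_cancel]
  rw [hprim]
  exact continuous_const.add
    (intervalIntegral.continuous_primitive (fun _ _ ↦ hint.intervalIntegrable) 0)

lemma tendsto_stdGaussCDF_neg_div_add {α : Type*} {l : Filter α} {s ε : α → ℝ} (k : ℝ)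
    (hs : Tendsto s l (𝓝[>] 0)) (hε : Tendsto ε l (𝓝 0)) :
    Tendsto (fun x ↦ stdGaussCDF (-k / s x + ε x)) l
      (𝓝 (if k < 0 then 1 else if 0 < k then 0 else stdGaussCDF 0)) := by
  have hinv : Tendsto (fun x ↦ (s x)⁻¹) l atTop := tendsto_inv_nhdsGT_zero.comp hs
  simp only [div_eq_mul_inv]
  rcases lt_trichotomy k 0 with hk | rfl | hk
  · rw [if_pos hk]
    exact tendsto_stdGaussCDF_atTop.comp
      ((hinv.const_mul_atTop (neg_pos.2 hk)).atTop_add hε)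
  · simpa [Function.comp_def] using (continuous_stdGaussCDF.tendsto 0).comp hε
  · rw [if_neg hk.not_gt, if_pos hk]
    exact tendsto_stdGaussCDF_atBot.comp
      ((hinv.const_mul_atTop_of_neg (neg_lt_zero.2 hk)).atBot_add hε)

theorem stmt18 (k : ℝ) (v : ℝ → ℝ) (hv : ∀ τ, 0 < τ → 0 < v τ)
    (hvanish : Filter.Tendsto (fun τ => v τ * Real.sqrt τ)
      (nhdsWithin 0 (Set.Ioi 0)) (nhds 0)) :
    Filter.Tendsto (fun τ => BS τ k (v τ)) (nhdsWithin 0 (Set.Ioi 0))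
      (nhds (max (1 - Real.exp k) 0)) := by
  have hs : Tendsto (fun τ ↦ v τ * √τ) (𝓝[>] 0) (𝓝[>] 0) :=
    tendsto_nhdsWithin_of_tendsto_nhds_of_eventually_within _ hvanish
      (eventually_nhdsWithin_of_forall fun τ hτ ↦ mul_pos (hv τ hτ) (Real.sqrt_pos.2 hτ))
  have hhalf : Tendsto (fun τ ↦ v τ * √τ / 2) (𝓝[>] 0) (𝓝 0) := by
    simpa using hvanish.div_const 2
  have hd1 := tendsto_stdGaussCDF_neg_div_add k hs hhalf
  have hd2 := tendsto_stdGaussCDF_neg_div_add k hs (by simpa using hhalf.neg)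
  convert hd1.sub (hd2.const_mul (exp k)) using 2
  · simp only [BS, d1, d2, sub_eq_add_neg]
  · split_ifs with hneg hpos
    · rw [max_eq_left (by linarith [exp_lt_one_iff.2 hneg])]; ring
    · rw [max_eq_right (by linarith [one_lt_exp_iff.2 hpos])]; ring
    · simp [le_antisymm (not_lt.1 hpos) (not_lt.1 hneg)]
end
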